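/- arXiv:1208.4072 — 6 statements merged into one kernel-verified Lean document; each statement's English description precedes it below -/
import Mathlib

section
/- For bounded measurable functions f, g on a probability space, the standard deviation satisfies the Leibniz inequality: σ(f·g) ≤ σ(f)·‖g‖∞ + ‖f‖∞·σ(g), where σ(f) = ‖f − ∫f dμ‖_{L²(μ)} and ‖·‖∞ is the essential supremum norm. -/
/-!
Write `a = μ f` and `b = μ g`. The mean is the constant closest to a function in `L²`, so
`σ(fg) ≤ ‖fg - ab‖₂`; and `fg - ab = (f - a) g + a (g - b)`, where `|a| ≤ ‖f‖∞`.
-/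

open MeasureTheory ProbabilityTheory
open scoped ENNReal

section

variable {X : Type*} [MeasurableSpace X] {μ : Measure X}

theorem sq_eLpNorm_two_eq_lintegral {E : Type*} [NormedAddCommGroup E] (u : X → E) :
    eLpNorm u 2 μ ^ 2 = ∫⁻ x, ‖u x‖ₑ ^ 2 ∂μ := by
  simpa using eLpNorm_nnreal_pow_eq_lintegral (f := u) (μ := μ) (p := 2) two_ne_zero

theorem evariance_eq_sq_eLpNorm (h : X → ℝ) :
    evariance h μ = eLpNorm (fun x => h x - ∫ y, h y ∂μ) 2 μ ^ 2 := by
  rw [sq_eLpNorm_two_eq_lintegral]; rfl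

theorem evariance_sub_const [IsProbabilityMeasure μ] {h : X → ℝ} (hh : Integrable h μ) (c : ℝ) :
    evariance (fun x => h x - c) μ = evariance h μ := by
  simp only [evariance, integral_sub hh (integrable_const c), integral_const, probReal_univ,
    one_smul, sub_sub_sub_cancel_right]

theorem eLpNorm_sub_integral_le_eLpNorm_sub_const [IsProbabilityMeasure μ] {h : X → ℝ}
    (hh : MemLp h 2 μ) (c : ℝ) :
    eLpNorm (fun x => h x - ∫ y, h y ∂μ) 2 μ ≤ eLpNorm (fun x => h x - c) 2 μ := by
  have hvar : evariance h μ ≤ ∫⁻ x, ‖h x - c‖ₑ ^ 2 ∂μ := by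
    rw [← evariance_sub_const (hh.integrable one_le_two) c,
      evariance_def' (X := fun x => h x - c)
        (hh.aestronglyMeasurable.sub aestronglyMeasurable_const)]
    exact tsub_le_self
  rwa [evariance_eq_sq_eLpNorm, ← sq_eLpNorm_two_eq_lintegral,
    ENNReal.pow_le_pow_left_iff two_ne_zero] at hvar

theorem enorm_integral_le_eLpNorm_top [IsProbabilityMeasure μ] {E : Type*}
    [NormedAddCommGroup E] [NormedSpace ℝ E] (f : X → E) : ‖∫ x, f x ∂μ‖ₑ ≤ eLpNorm f ⊤ μ :=
  calc ‖∫ x, f x ∂μ‖ₑ ≤ ∫⁻ x, ‖f x‖ₑ ∂μ := enorm_integral_le_lintegral_enorm f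
    _ ≤ ∫⁻ _, eLpNorm f ⊤ μ ∂μ := lintegral_mono_ae (enorm_ae_le_eLpNormEssSup f μ)
    _ = eLpNorm f ⊤ μ := by simp

theorem eLpNorm_mul_sub_mul_le {p : ℝ≥0∞} (hp : 1 ≤ p) {f g : X → ℝ}
    (hf : AEStronglyMeasurable f μ) (hg : AEStronglyMeasurable g μ) (a b : ℝ) :
    eLpNorm (fun x => f x * g x - a * b) p μ ≤
      eLpNorm (fun x => f x - a) p μ * eLpNorm g ⊤ μ + ‖a‖ₑ * eLpNorm (fun x => g x - b) p μ := by
  have hsplit : (fun x => f x * g x - a * b) =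
      (fun x => f x - a) • g + a • fun x => g x - b := by
    ext x
    change _ = (f x - a) * g x + a * (g x - b)
    ring
  have hfa : AEStronglyMeasurable (fun x => f x - a) μ := hf.sub aestronglyMeasurable_const
  have hgb : AEStronglyMeasurable (fun x => g x - b) μ := hg.sub aestronglyMeasurable_const
  rw [hsplit]
  exact (eLpNorm_add_le (hfa.smul hg) (hgb.const_smul a) hp).trans
    (add_le_add (eLpNorm_smul_le_eLpNorm_mul_eLpNorm_top p g hfa) eLpNorm_const_smul_le)

end

/-- Standard deviation is a Leibniz seminorm on bounded measurable functions
on a probability space: σ(fg) ≤ σ(f)‖g‖∞ + ‖f‖∞σ(g). -/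
theorem stdDev_leibniz {X : Type*} [MeasurableSpace X] (μ : Measure X)
    [IsProbabilityMeasure μ] (f g : X → ℝ) (hf : Measurable f) (hg : Measurable g)
    (hfb : eLpNorm f ⊤ μ ≠ ⊤) (hgb : eLpNorm g ⊤ μ ≠ ⊤) :
    eLpNorm (fun x => f x * g x - ∫ y, f y * g y ∂μ) 2 μ ≤
      eLpNorm (fun x => f x - ∫ y, f y ∂μ) 2 μ * eLpNorm g ⊤ μ +
        eLpNorm f ⊤ μ * eLpNorm (fun x => g x - ∫ y, g y ∂μ) 2 μ := by
  have hf_top : MemLp f ⊤ μ := ⟨hf.aestronglyMeasurable, hfb.lt_top⟩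
  have hg_top : MemLp g ⊤ μ := ⟨hg.aestronglyMeasurable, hgb.lt_top⟩
  have hfg : MemLp (fun x => f x * g x) 2 μ :=
    (hg_top.mono_exponent (p := 2) le_top).mul' hf_top
  calc eLpNorm (fun x => f x * g x - ∫ y, f y * g y ∂μ) 2 μ
      ≤ eLpNorm (fun x => f x * g x - (∫ y, f y ∂μ) * ∫ y, g y ∂μ) 2 μ :=
        eLpNorm_sub_integral_le_eLpNorm_sub_const hfg _
    _ ≤ eLpNorm (fun x => f x - ∫ y, f y ∂μ) 2 μ * eLpNorm g ⊤ μ +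
          ‖∫ y, f y ∂μ‖ₑ * eLpNorm (fun x => g x - ∫ y, g y ∂μ) 2 μ :=
        eLpNorm_mul_sub_mul_le one_le_two hf.aestronglyMeasurable hg.aestronglyMeasurable _ _
    _ ≤ _ := by gcongr; exact enorm_integral_le_eLpNorm_top f
end

section
/- Let A be a unital C*-algebra, μ a state on A, and define L₀(a) = μ((a − μ(a))*(a − μ(a)))^{1/2}. Then L₀ is a Leibniz seminorm: L₀(ab) ≤ ‖a‖·L₀(b) + L₀(a)·‖b‖ for all a, b ∈ A, and L₀(1) = 0. -/
open scoped ComplexOrder InnerProductSpace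

/-!
In the GNS semi-inner product `⟪x, y⟫ = μ (star x * y)` the vector `a - μ a • 1` is orthogonal to `1`,
so `L₀ a` is the distance from `a` to `ℂ • 1`. Writing
`a * b - (μ a * μ b) • 1 = a * (b - μ b • 1) + μ b • (a - μ a • 1)`, the Leibniz inequality follows
since left multiplication by `a` has GNS operator norm at most `‖a‖` and `‖μ b‖ ≤ ‖b‖`.
-/

/-- The seminorm L₀(a) = ‖a − μ(a)1‖_μ = (μ((a − μ(a))*(a − μ(a))))^{1/2} associated to a
state μ on a unital C*-algebra. -/
noncomputable def Lzero {A : Type*} [NormedRing A] [StarRing A] [CStarRing A]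
    [NormedAlgebra ℂ A] [StarModule ℂ A] (μ : A →ₗ[ℂ] ℂ) (a : A) : ℝ :=
  Real.sqrt (μ (star (a - μ a • 1) * (a - μ a • 1))).re

namespace PositiveLinearMap

section NonUnital
variable {A : Type*} [NonUnitalCStarAlgebra A] [PartialOrder A] [StarOrderedRing A]
  (f : A →ₚ[ℂ] ℂ)

lemma norm_toPreGNS_mul_le (a x : A) : ‖f.toPreGNS (a * x)‖ ≤ ‖a‖ * ‖f.toPreGNS x‖ :=
  (f.leftMulMapPreGNS a).le_of_opNorm_le
    ((LinearMap.mkContinuous_norm_le' _ _).trans_eq (max_eq_left (norm_nonneg a))) _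

end NonUnital

variable {A : Type*} [CStarAlgebra A] [PartialOrder A] [StarOrderedRing A]
  {f : A →ₚ[ℂ] ℂ}

lemma Lzero_eq_norm_toPreGNS (a : A) :
    Lzero f.toLinearMap a = ‖f.toPreGNS (a - f a • 1)‖ := rfl

lemma norm_toPreGNS_one (hf : f 1 = 1) : ‖f.toPreGNS 1‖ = 1 := by
  simp [preGNS_norm_def, hf]

lemma norm_apply_le_of_map_one (hf : f 1 = 1) (b : A) : ‖f b‖ ≤ ‖b‖ :=
  calc ‖f b‖ = ‖⟪f.toPreGNS 1, f.toPreGNS b⟫_ℂ‖ := by simp [preGNS_inner_def]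
    _ ≤ ‖f.toPreGNS b‖ := by
        simpa [norm_toPreGNS_one hf] using norm_inner_le_norm (𝕜 := ℂ) (f.toPreGNS 1) _
    _ ≤ ‖b‖ := by simpa [norm_toPreGNS_one hf] using f.norm_toPreGNS_mul_le b 1

lemma inner_toPreGNS_one_sub_apply_smul_one (hf : f 1 = 1) (a : A) :
    ⟪f.toPreGNS 1, f.toPreGNS (a - f a • 1)⟫_ℂ = 0 := by
  simp [preGNS_inner_def, hf]

lemma Lzero_le_norm_toPreGNS_sub_smul_one (hf : f 1 = 1) (a : A) (c : ℂ) :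
    Lzero f.toLinearMap a ≤ ‖f.toPreGNS (a - c • 1)‖ := by
  have hsplit : f.toPreGNS (a - c • 1) = f.toPreGNS (a - f a • 1) + (f a - c) • f.toPreGNS 1 := by
    simp only [map_sub, map_smul, sub_smul]; abel
  have horth : ⟪f.toPreGNS (a - f a • 1), (f a - c) • f.toPreGNS 1⟫_ℂ = 0 := by
    rw [inner_smul_right, inner_eq_zero_symm.mp (inner_toPreGNS_one_sub_apply_smul_one hf a),
      mul_zero]
  have hpyth := norm_add_sq_eq_norm_sq_add_norm_sq_of_inner_eq_zero _ _ horth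
  rw [Lzero_eq_norm_toPreGNS, hsplit, mul_self_le_mul_self_iff (norm_nonneg _) (norm_nonneg _),
    hpyth]
  exact le_add_of_nonneg_right (mul_self_nonneg _)

theorem Lzero_mul_le (hf : f 1 = 1) (a b : A) :
    Lzero f.toLinearMap (a * b) ≤ ‖a‖ * Lzero f.toLinearMap b + Lzero f.toLinearMap a * ‖b‖ := by
  have hsplit : a * b - (f a * f b) • 1 = a * (b - f b • 1) + f b • (a - f a • 1) := by
    simp only [mul_sub, smul_sub, mul_smul_comm, mul_one, smul_smul, mul_comm (f b)]
    abel
  calc Lzero f.toLinearMap (a * b) ≤ ‖f.toPreGNS (a * b - (f a * f b) • 1)‖ :=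
        Lzero_le_norm_toPreGNS_sub_smul_one hf _ _
    _ ≤ ‖f.toPreGNS (a * (b - f b • 1))‖ + ‖f b‖ * Lzero f.toLinearMap a := by
        rw [hsplit, map_add, map_smul]
        exact (norm_add_le _ _).trans_eq (by rw [norm_smul]; rfl)
    _ ≤ ‖a‖ * Lzero f.toLinearMap b + Lzero f.toLinearMap a * ‖b‖ := by
        rw [mul_comm ‖f b‖]
        exact add_le_add (f.norm_toPreGNS_mul_le _ _)
          (mul_le_mul_of_nonneg_left (norm_apply_le_of_map_one hf b) (Real.sqrt_nonneg _))

end PositiveLinearMap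

/-- For a state μ on a unital C*-algebra, L₀(a) = ‖a − μ(a)1‖_μ is a Leibniz seminorm:
L₀(1) = 0 and L₀(ab) ≤ ‖a‖L₀(b) + L₀(a)‖b‖. -/
theorem Lzero_leibniz {A : Type*} [NormedRing A] [StarRing A] [CStarRing A]
    [NormedAlgebra ℂ A] [StarModule ℂ A] [CompleteSpace A]
    (μ : A →ₗ[ℂ] ℂ) (hpos : ∀ a : A, 0 ≤ μ (star a * a)) (hone : μ 1 = 1) :
    Lzero μ (1 : A) = 0 ∧
      ∀ a b : A, Lzero μ (a * b) ≤ ‖a‖ * Lzero μ b + Lzero μ a * ‖b‖ := by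
  let _ : CStarAlgebra A := {}
  -- `A` carries no order: the spectral order makes `μ` a positive map, so its GNS space is available.
  let _ := CStarAlgebra.spectralOrder A
  have := CStarAlgebra.spectralOrderedRing A
  let f : A →ₚ[ℂ] ℂ := .mk₀ μ fun x hx => by
    obtain ⟨s, rfl⟩ := CStarAlgebra.nonneg_iff_eq_star_mul_self.mp hx
    exact hpos s
  exact ⟨by simp [Lzero, hone], f.Lzero_mul_le hone⟩
end

section
/- For the GNS representation of a unital C*-algebra A with faithful state μ, let E be the orthogonal projection of H = L²(A, μ) onto ℂ·1. Then for every a ∈ A, the operator norm of the commutator [E, π(a)] equals σ^μ(a) = max(‖a − μ(a)‖_μ, ‖a* − μ(a*)‖_μ). -/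
/-!
Let `P` be the orthogonal projection onto `ℂ ξ` and `Q = 1 - P`. The commutator `C = P T - T P`
is the off-diagonal operator `P T Q - Q T P`: its two blocks act on the orthogonal pieces `Q x`,
`P x` and land in the orthogonal subspaces `range P`, `range Q`, so `‖C‖ ≤ max ‖Q T P‖ ‖P T Q‖`,
while `C Q = P T Q` and `C P = -Q T P` give the reverse inequality. Since `P` has rank one,
`‖Q T P‖ = ‖Q T ξ‖`, and passing to adjoints `‖P T Q‖ = ‖Q T* P‖ = ‖Q T* ξ‖`.
Finally `π (a*) = π(a)*`.
-/

section

open ContinuousLinearMap Submodule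
open scoped InnerProductSpace

variable {𝕜 H : Type*} [RCLike 𝕜] [NormedAddCommGroup H] [InnerProductSpace 𝕜 H]

section OffDiagonal

variable (K : Submodule 𝕜 H) [K.HasOrthogonalProjection] (T : H →L[𝕜] H)

lemma starProjection_mul_starProjection_orthogonal :
    K.starProjection * Kᗮ.starProjection = 0 :=
  K.isOrtho_orthogonal_right.starProjection_comp_starProjection

lemma starProjection_orthogonal_mul_starProjection :
    Kᗮ.starProjection * K.starProjection = 0 :=
  K.isOrtho_orthogonal_right.symm.starProjection_comp_starProjection

lemma starProjection_mul_sub_mul_starProjection :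
    K.starProjection * T - T * K.starProjection =
      K.starProjection * T * Kᗮ.starProjection - Kᗮ.starProjection * T * K.starProjection := by
  rw [starProjection_orthogonal']
  noncomm_ring

lemma norm_starProjection_mul_sub_mul_starProjection_le :
    ‖K.starProjection * T - T * K.starProjection‖ ≤
      max ‖Kᗮ.starProjection * T * K.starProjection‖
        ‖K.starProjection * T * Kᗮ.starProjection‖ := by
  set P := K.starProjection
  set Q := Kᗮ.starProjection
  have hPP : P * P = P := K.isIdempotentElem_starProjection
  have hQQ : Q * Q = Q := Kᗮ.isIdempotentElem_starProjection
  have hPQ : P * Q = 0 := starProjection_mul_starProjection_orthogonal K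
  have hQP : Q * P = 0 := starProjection_orthogonal_mul_starProjection K
  rw [starProjection_mul_sub_mul_starProjection]
  set X := P * T * Q
  set Y := Q * T * P
  set M := max ‖Y‖ ‖X‖
  refine opNorm_le_bound _ (by positivity) fun x => ?_
  have hPC : P * (X - Y) = X := by
    simp only [X, Y, mul_sub, ← mul_assoc, hPP, hPQ, zero_mul, sub_zero]
  have hQC : Q * (X - Y) = -Y := by
    simp only [X, Y, mul_sub, ← mul_assoc, hQQ, hQP, zero_mul, zero_sub]
  have hX : ‖X x‖ ≤ M * ‖Q x‖ := calc
    ‖X x‖ = ‖X (Q x)‖ := by rw [← mul_apply_eq_comp, mul_assoc, hQQ]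
    _ ≤ ‖X‖ * ‖Q x‖ := X.le_opNorm _
    _ ≤ M * ‖Q x‖ := by gcongr; exact le_max_right _ _
  have hY : ‖Y x‖ ≤ M * ‖P x‖ := calc
    ‖Y x‖ = ‖Y (P x)‖ := by rw [← mul_apply_eq_comp, mul_assoc, hPP]
    _ ≤ ‖Y‖ * ‖P x‖ := Y.le_opNorm _
    _ ≤ M * ‖P x‖ := by gcongr; exact le_max_left _ _
  refine le_of_sq_le_sq ?_ (by positivity)
  calc ‖(X - Y) x‖ ^ 2 = ‖X x‖ ^ 2 + ‖Y x‖ ^ 2 := by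
        rw [norm_sq_eq_add_norm_sq_starProjection _ K, ← mul_apply_eq_comp,
          ← mul_apply_eq_comp, hPC, hQC, neg_apply, norm_neg]
    _ ≤ (M * ‖Q x‖) ^ 2 + (M * ‖P x‖) ^ 2 := by gcongr
    _ = (M * ‖x‖) ^ 2 := by
        rw [mul_pow (M := ℝ) M ‖x‖, norm_sq_eq_add_norm_sq_starProjection x K]; ring

theorem norm_starProjection_mul_sub_mul_starProjection :
    ‖K.starProjection * T - T * K.starProjection‖ =
      max ‖Kᗮ.starProjection * T * K.starProjection‖
        ‖K.starProjection * T * Kᗮ.starProjection‖ := by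
  refine le_antisymm (norm_starProjection_mul_sub_mul_starProjection_le K T) ?_
  set P := K.starProjection
  set Q := Kᗮ.starProjection
  have hPP : P * P = P := K.isIdempotentElem_starProjection
  have hPQ : P * Q = 0 := starProjection_mul_starProjection_orthogonal K
  have hQ : Q = 1 - P := starProjection_orthogonal' K
  set C := P * T - T * P
  have hCP : C * P = -(Q * T * P) := by
    rw [sub_mul, mul_assoc T, hPP, hQ]
    noncomm_ring
  have hCQ : C * Q = P * T * Q := by
    rw [sub_mul, mul_assoc T, hPQ, mul_zero, sub_zero]
  refine max_le ?_ ?_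
  · calc ‖Q * T * P‖ = ‖C * P‖ := by rw [hCP, norm_neg]
      _ ≤ ‖C‖ * ‖P‖ := norm_mul_le _ _
      _ ≤ ‖C‖ := mul_le_of_le_one_right (norm_nonneg _) K.starProjection_norm_le
  · calc ‖P * T * Q‖ = ‖C * Q‖ := by rw [hCQ]
      _ ≤ ‖C‖ * ‖Q‖ := norm_mul_le _ _
      _ ≤ ‖C‖ := mul_le_of_le_one_right (norm_nonneg _) Kᗮ.starProjection_norm_le

end OffDiagonal

theorem norm_mul_starProjection_singleton {ξ : H} (hξ : ‖ξ‖ = 1) (S : H →L[𝕜] H) :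
    ‖S * (𝕜 ∙ ξ).starProjection‖ = ‖S ξ‖ := by
  apply le_antisymm
  · refine opNorm_le_bound _ (norm_nonneg _) fun x => ?_
    rw [mul_apply_eq_comp, starProjection_unit_singleton 𝕜 hξ, map_smul, norm_smul, mul_comm]
    gcongr
    simpa [hξ] using norm_inner_le_norm (𝕜 := 𝕜) ξ x
  · have hPξ : (𝕜 ∙ ξ).starProjection ξ = ξ :=
      starProjection_eq_self_iff.mpr (mem_span_singleton_self ξ)
    simpa [hξ, mul_apply_eq_comp, hPξ] using (S * (𝕜 ∙ ξ).starProjection).le_opNorm ξ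

theorem norm_starProjection_singleton_mul_sub_mul_starProjection [CompleteSpace H] {ξ : H}
    (hξ : ‖ξ‖ = 1) (T : H →L[𝕜] H) :
    ‖(𝕜 ∙ ξ).starProjection * T - T * (𝕜 ∙ ξ).starProjection‖ =
      max ‖T ξ - ⟪ξ, T ξ⟫_𝕜 • ξ‖ ‖star T ξ - ⟪ξ, star T ξ⟫_𝕜 • ξ‖ := by
  have hQ (y : H) : (𝕜 ∙ ξ)ᗮ.starProjection y = y - ⟪ξ, y⟫_𝕜 • ξ := by
    rw [starProjection_orthogonal_val, starProjection_unit_singleton 𝕜 hξ]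
  have hstar : star ((𝕜 ∙ ξ).starProjection * T * (𝕜 ∙ ξ)ᗮ.starProjection) =
      (𝕜 ∙ ξ)ᗮ.starProjection * star T * (𝕜 ∙ ξ).starProjection := by
    simp only [star_mul, (isSelfAdjoint_starProjection _).star_eq, mul_assoc]
  rw [norm_starProjection_mul_sub_mul_starProjection,
    ← norm_star ((𝕜 ∙ ξ).starProjection * T * _), hstar,
    norm_mul_starProjection_singleton hξ, norm_mul_starProjection_singleton hξ,
    mul_apply_eq_comp, mul_apply_eq_comp, hQ, hQ]

end

theorem norm_commutator_projection_eq_stdDev_general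
    {A : Type*} [NormedRing A] [StarRing A]
    [NormedAlgebra ℂ A]
    {H : Type*} [NormedAddCommGroup H] [InnerProductSpace ℂ H] [CompleteSpace H]
    (π : A →⋆ₐ[ℂ] (H →L[ℂ] H)) (ξ : H) (hξ : ‖ξ‖ = 1)
    (E : H →L[ℂ] H)
    (hE : E = (ℂ ∙ ξ).subtypeL.comp (ℂ ∙ ξ).orthogonalProjection) (a : A) :
    ‖E.comp (π a) - (π a).comp E‖ =
      max ‖π a ξ - (inner ℂ ξ (π a ξ) : ℂ) • ξ‖
        ‖π (star a) ξ - (inner ℂ ξ (π (star a) ξ) : ℂ) • ξ‖ := by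
  subst hE
  rw [map_star]
  exact norm_starProjection_singleton_mul_sub_mul_starProjection hξ (π a)

/-- For the GNS representation π of a unital C*-algebra A on H = L²(A, μ) associated
to a faithful state μ (with cyclic unit vector ξ, so μ(a) = ⟪ξ, π(a)ξ⟫), letting E be
the orthogonal projection of H onto ℂξ = ℂ·1_A, the operator norm of the commutator
[E, π(a)] equals σ^μ(a) = max(‖a − μ(a)‖_μ, ‖a* − μ(a*)‖_μ), where
‖c‖_μ = μ(c*c)^{1/2} = ‖π(c)ξ‖. -/
theorem norm_commutator_projection_eq_stdDev
    {A : Type*} [NormedRing A] [StarRing A] [CStarRing A]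
    [NormedAlgebra ℂ A] [StarModule ℂ A] [CompleteSpace A]
    {H : Type*} [NormedAddCommGroup H] [InnerProductSpace ℂ H] [CompleteSpace H]
    (π : A →⋆ₐ[ℂ] (H →L[ℂ] H)) (ξ : H) (hξ : ‖ξ‖ = 1)
    (hcyclic : DenseRange fun a : A => π a ξ)
    (hfaithful : ∀ a : A, π a ξ = 0 → a = 0)
    (E : H →L[ℂ] H)
    (hE : E = (ℂ ∙ ξ).subtypeL.comp (ℂ ∙ ξ).orthogonalProjection) (a : A) :
    ‖E.comp (π a) - (π a).comp E‖ =
      max ‖π a ξ - (inner ℂ ξ (π a ξ) : ℂ) • ξ‖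
        ‖π (star a) ξ - (inner ℂ ξ (π (star a) ξ) : ℂ) • ξ‖ :=
  norm_commutator_projection_eq_stdDev_general π ξ hξ E hE a
end

section
/- Let E : A → D be a conditional expectation from a unital C*-algebra onto a unital C*-subalgebra, and define L₀ on B = A ⊕ D by L₀((a,d)) = ‖a − d‖_E where ‖x‖_E = ‖E(x*x)‖^{1/2}. Then L₀ is a strongly Leibniz seminorm: L₀ satisfies the Leibniz inequality with respect to the C*-norm on B and if (a,d) is invertible in B then L₀((a,d)⁻¹) ≤ ‖(a,d)⁻¹‖² L₀((a,d)). -/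
/-!
Positivity of `E` gives `E((x+y)⋆(x+y)) ≤ (1+t) E(x⋆x) + (1+t⁻¹) E(y⋆y)` for every `t > 0`, and
optimizing in `t` makes `‖·‖_E` subadditive. Left multiplication by `a` scales `‖·‖_E` by at most
`‖a‖` since `E` is monotone and `a⋆a ≤ ‖a‖²`; right multiplication by `d ∈ D` by at most `‖d‖`
since `E` is a `D`-bimodule map. The Leibniz inequality follows from
`ab - cd = a(b - d) + (a - c)d`, and the inverse estimate from `b - e = b(d - a)e`
when `ba = 1` and `de = 1`.
-/

/-- The norm ‖x‖_E = ‖E(x*x)‖^{1/2} associated to a map E on a C*-algebra. -/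
noncomputable def normE {A : Type*} [NormedRing A] [StarRing A] [CStarRing A]
    [NormedAlgebra ℂ A] [StarModule ℂ A] (E : A →ₗ[ℂ] A) (x : A) : ℝ :=
  Real.sqrt ‖E (star x * x)‖

theorem le_add_sq_of_forall_pos {a b c : ℝ} (ha : 0 ≤ a) (hb : 0 ≤ b)
    (h : ∀ t : ℝ, 0 < t → c ≤ (1 + t) * a ^ 2 + (1 + t⁻¹) * b ^ 2) : c ≤ (a + b) ^ 2 := by
  -- Times `t`, the hypothesis makes a quadratic in `t` nonnegative; its discriminant bound is the
  -- optimum over `t` and needs no case split on `a = 0` or `b = 0`.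
  rcases le_or_gt c (a ^ 2 + b ^ 2) with hc | hc
  · nlinarith [mul_nonneg ha hb]
  have hquad : ∀ t : ℝ, 0 ≤ a ^ 2 * (t * t) + (a ^ 2 + b ^ 2 - c) * t + b ^ 2 := by
    intro t
    rcases le_or_gt t 0 with ht | ht
    · nlinarith [mul_nonneg_of_nonpos_of_nonpos ht (by linarith : a ^ 2 + b ^ 2 - c ≤ 0)]
    · have := mul_le_mul_of_nonneg_left (h t ht) ht.le
      field_simp at this
      nlinarith
  have := discrim_le_zero hquad
  rw [discrim] at this
  nlinarith [mul_nonneg ha hb]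

section Order

variable {A : Type*} [NonUnitalCStarAlgebra A] [PartialOrder A] [StarOrderedRing A]

theorem star_add_mul_add_le (x y : A) {s : ℝ} (hs : s ≠ 0) :
    star (x + y) * (x + y) ≤ (1 + s ^ 2) • (star x * x) + (1 + (s ^ 2)⁻¹) • (star y * y) := by
  rw [← sub_nonneg]
  convert star_mul_self_nonneg (s • x - s⁻¹ • y) using 1
  simp only [star_add, star_sub, star_smul, star_trivial, add_mul, mul_add, sub_mul, mul_sub,
    smul_mul_assoc, mul_smul_comm]
  match_scalars <;> field_simp <;> ring

theorem LinearMap.monotone_of_map_star_mul_self_nonneg {B : Type*} [AddCommGroup B]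
    [PartialOrder B] [IsOrderedAddMonoid B] [Module ℂ B] (f : A →ₗ[ℂ] B)
    (hf : ∀ a, 0 ≤ f (star a * a)) : Monotone f := by
  intro x y hxy
  obtain ⟨b, hb⟩ := CStarAlgebra.nonneg_iff_eq_star_mul_self.mp (sub_nonneg.mpr hxy)
  simpa [← hb] using hf b

end Order

section normE

variable {A : Type*} [CStarAlgebra A] (E : A →ₗ[ℂ] A)

theorem normE_nonneg (x : A) : 0 ≤ normE E x := Real.sqrt_nonneg _

theorem normE_neg (x : A) : normE E (-x) = normE E x := by
  simp [normE]

theorem sq_normE (x : A) : normE E x ^ 2 = ‖E (star x * x)‖ := Real.sq_sqrt (norm_nonneg _)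

theorem normE_le_iff {x : A} {r : ℝ} (hr : 0 ≤ r) :
    normE E x ≤ r ↔ ‖E (star x * x)‖ ≤ r ^ 2 :=
  Real.sqrt_le_left hr

theorem normE_mul_right_le {d : A} (hd : ∀ w, E (star d * w * d) = star d * E w * d) (x : A) :
    normE E (x * d) ≤ normE E x * ‖d‖ := by
  rw [normE_le_iff E (mul_nonneg (normE_nonneg E x) (norm_nonneg d)), star_mul, mul_assoc,
    ← mul_assoc (star x), ← mul_assoc, hd, mul_pow, sq_normE]
  calc ‖star d * E (star x * x) * d‖ ≤ ‖star d‖ * ‖E (star x * x)‖ * ‖d‖ := norm_mul₃_le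
    _ = ‖E (star x * x)‖ * ‖d‖ ^ 2 := by rw [norm_star]; ring

variable [PartialOrder A] [StarOrderedRing A] {E}

theorem normE_mul_left_le (hE : ∀ a, 0 ≤ E (star a * a)) (a x : A) :
    normE E (a * x) ≤ ‖a‖ * normE E x := by
  have hle : star (a * x) * (a * x) ≤ ‖a‖ ^ 2 • (star x * x) := by
    rw [star_mul, mul_assoc, ← mul_assoc (star a), ← mul_assoc, sq,
      ← CStarRing.norm_star_mul_self]
    exact CStarAlgebra.star_left_conjugate_le_norm_smul
  rw [normE_le_iff E (mul_nonneg (norm_nonneg a) (normE_nonneg E x)), mul_pow, sq_normE]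
  calc ‖E (star (a * x) * (a * x))‖ ≤ ‖E (‖a‖ ^ 2 • (star x * x))‖ :=
        CStarAlgebra.norm_le_norm_of_nonneg_of_le (hE _)
          (E.monotone_of_map_star_mul_self_nonneg hE hle)
    _ = ‖a‖ ^ 2 * ‖E (star x * x)‖ := by
        rw [LinearMap.map_smul_of_tower, norm_smul, Real.norm_of_nonneg (by positivity)]

theorem normE_add_le (hE : ∀ a, 0 ≤ E (star a * a)) (x y : A) :
    normE E (x + y) ≤ normE E x + normE E y := by
  rw [normE_le_iff E (add_nonneg (normE_nonneg E x) (normE_nonneg E y))]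
  refine le_add_sq_of_forall_pos (normE_nonneg E x) (normE_nonneg E y) fun t ht => ?_
  have hs : Real.sqrt t ≠ 0 := (Real.sqrt_pos.mpr ht).ne'
  have hle := E.monotone_of_map_star_mul_self_nonneg hE (star_add_mul_add_le x y hs)
  rw [Real.sq_sqrt ht.le, map_add, LinearMap.map_smul_of_tower, LinearMap.map_smul_of_tower] at hle
  calc ‖E (star (x + y) * (x + y))‖
      ≤ ‖(1 + t) • E (star x * x) + (1 + t⁻¹) • E (star y * y)‖ :=
        CStarAlgebra.norm_le_norm_of_nonneg_of_le (hE _) hle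
    _ ≤ (1 + t) * normE E x ^ 2 + (1 + t⁻¹) * normE E y ^ 2 := by
        rw [sq_normE, sq_normE]
        refine (norm_add_le _ _).trans_eq ?_
        rw [norm_smul, norm_smul, Real.norm_of_nonneg (by positivity),
          Real.norm_of_nonneg (by positivity)]

theorem normE_mul_sub_mul_le (hE : ∀ a, 0 ≤ E (star a * a)) {d : A}
    (hd : ∀ w, E (star d * w * d) = star d * E w * d) (a b c : A) :
    normE E (a * b - c * d) ≤ ‖a‖ * normE E (b - d) + normE E (a - c) * ‖d‖ :=
  calc normE E (a * b - c * d) = normE E (a * (b - d) + (a - c) * d) := by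
        congr 1; noncomm_ring
    _ ≤ _ := (normE_add_le hE _ _).trans
        (add_le_add (normE_mul_left_le hE _ _) (normE_mul_right_le E hd _))

theorem normE_sub_le_of_mul_eq_one (hE : ∀ a, 0 ≤ E (star a * a)) {e : A}
    (he : ∀ w, E (star e * w * e) = star e * E w * e) {a b d : A} (hba : b * a = 1)
    (hde : d * e = 1) : normE E (b - e) ≤ ‖b‖ * ‖e‖ * normE E (a - d) := by
  have hfactor : b - e = b * (-(a - d) * e) := by
    rw [neg_sub, sub_mul, mul_sub, hde, mul_one, ← mul_assoc, hba, one_mul]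
  calc normE E (b - e) ≤ ‖b‖ * (normE E (-(a - d)) * ‖e‖) := hfactor ▸
        (normE_mul_left_le hE _ _).trans
          (mul_le_mul_of_nonneg_left (normE_mul_right_le E he _) (norm_nonneg _))
    _ = ‖b‖ * ‖e‖ * normE E (a - d) := by rw [normE_neg]; ring

end normE

theorem condExp_Lzero_stronglyLeibniz_general {A : Type*} [NormedRing A] [StarRing A]
    [CStarRing A] [NormedAlgebra ℂ A] [StarModule ℂ A] [CompleteSpace A]
    [PartialOrder A] [StarOrderedRing A]
    (D : StarSubalgebra ℂ A)
    (E : A →ₗ[ℂ] A)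
    (hpos : ∀ a : A, 0 ≤ E (star a * a))
    (hbimod : ∀ c ∈ D, ∀ d ∈ D, ∀ a : A, E (c * a * d) = c * E a * d) :
    (∀ p q : A × ↥D, normE E (p.1 * q.1 - ↑(p.2 * q.2)) ≤
        ‖p‖ * normE E (q.1 - ↑q.2) + normE E (p.1 - ↑p.2) * ‖q‖) ∧
      ∀ u : (A × ↥D)ˣ, normE E ((↑(u⁻¹ : (A × ↥D)ˣ) : A × ↥D).1 - ↑(↑(u⁻¹ : (A × ↥D)ˣ) : A × ↥D).2) ≤
        ‖(↑(u⁻¹ : (A × ↥D)ˣ) : A × ↥D)‖ ^ 2 * normE E ((↑u : A × ↥D).1 - ↑(↑u : A × ↥D).2) := by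
  let _ : CStarAlgebra A := {}
  have hD (d : D) (w : A) : E (star (d : A) * w * d) = star (d : A) * E w * d :=
    hbimod _ (star_mem d.2) _ d.2 w
  refine ⟨fun p q => ?_, fun u => ?_⟩
  · calc _ ≤ ‖p.1‖ * normE E (q.1 - q.2) + normE E (p.1 - p.2) * ‖(q.2 : A)‖ :=
          normE_mul_sub_mul_le hpos (hD q.2) _ _ _
      _ ≤ _ := by
          gcongr
          · exact normE_nonneg E _
          · exact norm_fst_le p
          · exact normE_nonneg E _
          · exact norm_snd_le q
  · have hba := congrArg Prod.fst u.inv_mul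
    have hde : ((u : A × D).2 : A) * ((u⁻¹ : (A × D)ˣ) : A × D).2 = 1 :=
      congrArg (fun x : A × D => (x.2 : A)) u.mul_inv
    calc _ ≤ ‖((u⁻¹ : (A × D)ˣ) : A × D).1‖ * ‖(((u⁻¹ : (A × D)ˣ) : A × D).2 : A)‖ *
          normE E ((u : A × D).1 - (u : A × D).2) :=
          normE_sub_le_of_mul_eq_one hpos (hD _) hba hde
      _ ≤ _ := by
          rw [sq]
          gcongr
          · exact normE_nonneg E _
          · exact norm_fst_le _
          · exact norm_snd_le ((u⁻¹ : (A × D)ˣ) : A × D)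

/-- Given a faithful conditional expectation E : A → D, the seminorm
L₀((a,d)) = ‖a − d‖_E on B = A ⊕ D is strongly Leibniz: it satisfies the Leibniz
inequality for the C*-norm ‖(a,d)‖ = max(‖a‖,‖d‖) on B, and for any invertible
(a,d) ∈ B one has L₀((a,d)⁻¹) ≤ ‖(a,d)⁻¹‖² L₀((a,d)). -/
theorem condExp_Lzero_stronglyLeibniz {A : Type*} [NormedRing A] [StarRing A]
    [CStarRing A] [NormedAlgebra ℂ A] [StarModule ℂ A] [CompleteSpace A]
    [PartialOrder A] [StarOrderedRing A]
    (D : StarSubalgebra ℂ A) (hD : IsClosed (D : Set A))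
    (E : A →ₗ[ℂ] A) (hrange : ∀ a, E a ∈ D) (hproj : ∀ d ∈ D, E d = d)
    (hpos : ∀ a : A, 0 ≤ E (star a * a))
    (hbimod : ∀ c ∈ D, ∀ d ∈ D, ∀ a : A, E (c * a * d) = c * E a * d)
    (hfaithful : ∀ a : A, E (star a * a) = 0 → a = 0) :
    (∀ p q : A × ↥D, normE E (p.1 * q.1 - ↑(p.2 * q.2)) ≤
        ‖p‖ * normE E (q.1 - ↑q.2) + normE E (p.1 - ↑p.2) * ‖q‖) ∧
      ∀ u : (A × ↥D)ˣ, normE E ((↑(u⁻¹ : (A × ↥D)ˣ) : A × ↥D).1 - ↑(↑(u⁻¹ : (A × ↥D)ˣ) : A × ↥D).2) ≤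
        ‖(↑(u⁻¹ : (A × ↥D)ˣ) : A × ↥D)‖ ^ 2 * normE E ((↑u : A × ↥D).1 - ↑(↑u : A × ↥D).2) :=
  condExp_Lzero_stronglyLeibniz_general D E hpos hbimod
end

section
/- Let A be a unital C*-algebra and P a projection in A. Then for every a ∈ A, ‖[P, a]‖ = max(‖P a (1−P)‖, ‖(1−P) a P‖), and the resulting *-seminorm Ls(a) = max(L(a), L(a*)) with L(a) = ‖(1−P)aP‖ is strongly Leibniz. -/
/-- For a projection P in a unital C*-algebra A: ‖[P,a]‖ = max(‖Pa(1−P)‖, ‖(1−P)aP‖),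
and the *-seminorm Ls(a) = max(‖(1−P)aP‖, ‖(1−P)a*P‖) is strongly Leibniz:
Ls(a*) = Ls(a), Ls(1) = 0, Ls(ab) ≤ ‖a‖Ls(b) + Ls(a)‖b‖, and
Ls(a⁻¹) ≤ ‖a⁻¹‖²Ls(a) for invertible a. -/
theorem projection_commutator_stronglyLeibniz {A : Type*} [NormedRing A] [StarRing A]
    [CStarRing A] [NormedAlgebra ℂ A] [StarModule ℂ A] [CompleteSpace A]
    (P : A) (hsa : star P = P) (hidem : P * P = P) :
    (∀ a : A, ‖P * a - a * P‖ = max ‖P * a * (1 - P)‖ ‖(1 - P) * a * P‖) ∧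
      (∀ a : A, max ‖(1 - P) * star a * P‖ ‖(1 - P) * star (star a) * P‖ =
        max ‖(1 - P) * a * P‖ ‖(1 - P) * star a * P‖) ∧
      (∀ a b : A, max ‖(1 - P) * (a * b) * P‖ ‖(1 - P) * star (a * b) * P‖ ≤
        ‖a‖ * max ‖(1 - P) * b * P‖ ‖(1 - P) * star b * P‖ +
          max ‖(1 - P) * a * P‖ ‖(1 - P) * star a * P‖ * ‖b‖) ∧
      ∀ u : Aˣ, max ‖(1 - P) * (↑(u⁻¹ : Aˣ) : A) * P‖ ‖(1 - P) * star (↑(u⁻¹ : Aˣ) : A) * P‖ ≤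
        ‖(↑(u⁻¹ : Aˣ) : A)‖ ^ 2 * max ‖(1 - P) * (↑u : A) * P‖ ‖(1 - P) * star (↑u : A) * P‖ := by
  letI : CStarAlgebra A := {}
  letI := CStarAlgebra.spectralOrder A
  haveI := CStarAlgebra.spectralOrderedRing A
  set Q : A := 1 - P with hQdef
  have hQQ : Q * Q = Q := by rw [hQdef]; noncomm_ring [hidem]
  have hsaQ : star Q = Q := by rw [hQdef, star_sub, star_one, hsa]
  have hPQ : P * Q = 0 := by rw [hQdef, mul_sub, mul_one, hidem, sub_self]
  have hQP : Q * P = 0 := by rw [hQdef, sub_mul, one_mul, hidem, sub_self]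
  have hPQ' : ∀ x : A, P * (Q * x) = 0 := fun x => by rw [← mul_assoc, hPQ, zero_mul]
  have hQP' : ∀ x : A, Q * (P * x) = 0 := fun x => by rw [← mul_assoc, hQP, zero_mul]
  have hPP' : ∀ x : A, P * (P * x) = P * x := fun x => by rw [← mul_assoc, hidem]
  have hQQ' : ∀ x : A, Q * (Q * x) = Q * x := fun x => by rw [← mul_assoc, hQQ]
  -- norms of projections
  have hnproj : ∀ R : A, star R = R → R * R = R → ‖R‖ ≤ 1 := by
    intro R h1 h2
    have := CStarRing.norm_star_mul_self (x := R)
    rw [h1, h2] at this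
    nlinarith [norm_nonneg R]
  have hnP : ‖P‖ ≤ 1 := hnproj P hsa hidem
  have hnQ : ‖Q‖ ≤ 1 := hnproj Q hsaQ hQQ
  have hn1 : ‖(1 : A)‖ ≤ 1 := by
    have := CStarRing.norm_star_mul_self (x := (1 : A))
    rw [star_one, one_mul] at this
    nlinarith [norm_nonneg (1 : A)]
  have halgnn : ∀ r : ℝ, 0 ≤ r → 0 ≤ algebraMap ℝ A r := by
    intro r hr
    have h1 : algebraMap ℝ A r = star (algebraMap ℝ A (Real.sqrt r)) * algebraMap ℝ A (Real.sqrt r) := by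
      rw [IsSelfAdjoint.algebraMap A (by simp [IsSelfAdjoint]), ← map_mul,
        Real.mul_self_sqrt hr]
    rw [h1]
    exact star_mul_self_nonneg _
  have halgmono : ∀ r s : ℝ, r ≤ s → algebraMap ℝ A r ≤ algebraMap ℝ A s := by
    intro r s h
    have := halgnn (s - r) (by linarith)
    rw [map_sub] at this
    exact sub_nonneg.mp this
  -- key commutator formula
  have hcomm : ∀ a : A, ‖P * a - a * P‖ = max ‖P * a * Q‖ ‖Q * a * P‖ := by
    intro a
    set b : A := P * a * Q with hbdef
    set d : A := Q * a * P with hddef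
    set c : A := P * a - a * P with hcdef
    set M : ℝ := max ‖b‖ ‖d‖ with hMdef
    have hM0 : 0 ≤ M := le_trans (norm_nonneg b) (le_max_left _ _)
    have hcbd : c = b - d := by rw [hcdef, hbdef, hddef, hQdef]; noncomm_ring
    -- cross terms vanish
    have hstarb : star b = Q * star a * P := by
      rw [hbdef]; simp [star_mul, hsa, hsaQ, mul_assoc]
    have hstard : star d = P * star a * Q := by
      rw [hddef]; simp [star_mul, hsa, hsaQ, mul_assoc]
    have hx1 : star b * d = 0 := by
      rw [hstarb, hddef]; simp [mul_assoc, hPQ', hQP']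
    have hx2 : star d * b = 0 := by
      rw [hstard, hbdef]; simp [mul_assoc, hPQ', hQP']
    have hkey : star c * c = star b * b + star d * d := by
      rw [hcbd, star_sub, sub_mul, mul_sub, mul_sub, hx1, hx2]
      abel
    -- each term is a conjugated corner
    have hbQ : star b * b = Q * (star b * b) * Q := by
      rw [hstarb, hbdef]; simp [mul_assoc, hQQ', hQQ]
    have hdP : star d * d = P * (star d * d) * P := by
      rw [hstard, hddef]; simp [mul_assoc, hPP', hidem]
    have hconjQ : star b * b ≤ M ^ 2 • Q := by
      have h1 : star b * b ≤ algebraMap ℝ A (M ^ 2) :=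
        le_trans CStarAlgebra.star_mul_le_algebraMap_norm_sq
          (halgmono _ _ (by nlinarith [le_max_left ‖b‖ ‖d‖, norm_nonneg b]))
      have h2 := star_left_conjugate_le_conjugate h1 Q
      rw [hsaQ] at h2
      calc star b * b = Q * (star b * b) * Q := hbQ
        _ ≤ Q * algebraMap ℝ A (M ^ 2) * Q := h2
        _ = M ^ 2 • Q := by
            simp [Algebra.algebraMap_eq_smul_one, mul_smul_comm, smul_mul_assoc, hQQ]
    have hconjP : star d * d ≤ M ^ 2 • P := by
      have h1 : star d * d ≤ algebraMap ℝ A (M ^ 2) :=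
        le_trans CStarAlgebra.star_mul_le_algebraMap_norm_sq
          (halgmono _ _ (by nlinarith [le_max_right ‖b‖ ‖d‖, norm_nonneg d]))
      have h2 := star_left_conjugate_le_conjugate h1 P
      rw [hsa] at h2
      calc star d * d = P * (star d * d) * P := hdP
        _ ≤ P * algebraMap ℝ A (M ^ 2) * P := h2
        _ = M ^ 2 • P := by
            simp [Algebra.algebraMap_eq_smul_one, mul_smul_comm, smul_mul_assoc, hidem]
    have hsum : star c * c ≤ M ^ 2 • (1 : A) := by
      have := add_le_add hconjQ hconjP
      rw [← hkey] at this
      calc star c * c ≤ M ^ 2 • Q + M ^ 2 • P := this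
        _ = M ^ 2 • (1 : A) := by rw [← smul_add, hQdef]; congr 1; abel
    have hnormcc : ‖star c * c‖ ≤ M ^ 2 := by
      calc ‖star c * c‖ ≤ ‖M ^ 2 • (1 : A)‖ :=
            CStarAlgebra.norm_le_norm_of_nonneg_of_le (star_mul_self_nonneg c) hsum
        _ = M ^ 2 * ‖(1 : A)‖ := by
            rw [norm_smul]; simp [abs_of_nonneg (by positivity : (0:ℝ) ≤ M ^ 2)]
        _ ≤ M ^ 2 := by nlinarith
    have hub : ‖c‖ ≤ M := by
      have := CStarRing.norm_star_mul_self (x := c)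
      nlinarith [norm_nonneg c]
    have hlb1 : ‖b‖ ≤ ‖c‖ := by
      have hPcQ : P * c * Q = b := by
        rw [hcdef, hbdef]
        simp [mul_sub, sub_mul, mul_assoc, hPP', hPQ', hPQ]
      calc ‖b‖ = ‖P * c * Q‖ := by rw [hPcQ]
        _ ≤ ‖P‖ * ‖c‖ * ‖Q‖ := by
            refine le_trans (norm_mul_le _ _) ?_
            gcongr
            exact norm_mul_le _ _
        _ ≤ 1 * ‖c‖ * 1 := by gcongr
        _ = ‖c‖ := by ring
    have hlb2 : ‖d‖ ≤ ‖c‖ := by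
      have hQcP : Q * c * P = -d := by
        rw [hcdef, hddef]
        simp [mul_sub, sub_mul, mul_assoc, hPP', hQP', hQP, hidem]
      calc ‖d‖ = ‖Q * c * P‖ := by rw [hQcP, norm_neg]
        _ ≤ ‖Q‖ * ‖c‖ * ‖P‖ := by
            refine le_trans (norm_mul_le _ _) ?_
            gcongr
            exact norm_mul_le _ _
        _ ≤ 1 * ‖c‖ * 1 := by gcongr
        _ = ‖c‖ := by ring
    exact le_antisymm hub (max_le hlb1 hlb2)
  -- flipping corners via star
  have hflip : ∀ a : A, ‖P * a * Q‖ = ‖Q * star a * P‖ := by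
    intro a
    rw [← norm_star]
    congr 1
    simp [star_mul, hsa, hsaQ, mul_assoc]
  -- Leibniz half
  have hleib : ∀ a b : A, ‖Q * (a * b) * P‖ ≤ ‖a‖ * ‖Q * b * P‖ + ‖Q * a * P‖ * ‖b‖ := by
    intro a b
    have hsplit : Q * (a * b) * P = (Q * a * P) * (b * P) + (Q * a * Q) * (Q * b * P) := by
      have : (P : A) + Q = 1 := by rw [hQdef]; abel
      calc Q * (a * b) * P = Q * a * ((P + Q) * (b * P)) := by
            rw [this]; simp [mul_assoc]
        _ = (Q * a * P) * (b * P) + (Q * a * Q) * (Q * b * P) := by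
            simp [add_mul, mul_add, mul_assoc, hQQ']
    calc ‖Q * (a * b) * P‖ ≤ ‖(Q * a * P) * (b * P)‖ + ‖(Q * a * Q) * (Q * b * P)‖ := by
          rw [hsplit]; exact norm_add_le _ _
      _ ≤ ‖Q * a * P‖ * (‖b‖ * ‖P‖) + (‖Q‖ * ‖a‖ * ‖Q‖) * ‖Q * b * P‖ := by
          gcongr
          · exact le_trans (norm_mul_le _ _) (by gcongr; exact norm_mul_le _ _)
          · refine le_trans (norm_mul_le _ _) ?_
            gcongr
            exact le_trans (norm_mul_le _ _) (by gcongr; exact norm_mul_le _ _)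
      _ ≤ ‖Q * a * P‖ * (‖b‖ * 1) + (1 * ‖a‖ * 1) * ‖Q * b * P‖ := by gcongr
      _ = ‖a‖ * ‖Q * b * P‖ + ‖Q * a * P‖ * ‖b‖ := by ring
  -- strongly Leibniz half
  have hinv : ∀ a v : A, a * v = 1 → v * a = 1 →
      ‖Q * v * P‖ ≤ ‖v‖ ^ 2 * max ‖Q * a * P‖ ‖Q * star a * P‖ := by
    intro a v hav hva
    have hid : (Q * v) * (P * a - a * P) * (v * P) = Q * v * P := by
      have h1 : ∀ x : A, a * (v * x) = x := fun x => by rw [← mul_assoc, hav, one_mul]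
      have h2 : ∀ x : A, v * (a * x) = x := fun x => by rw [← mul_assoc, hva, one_mul]
      simp [mul_sub, sub_mul, mul_assoc, h1, h2, hPP', hQP', hidem]
    have hc := hcomm a
    calc ‖Q * v * P‖ = ‖(Q * v) * (P * a - a * P) * (v * P)‖ := by rw [hid]
      _ ≤ ‖Q‖ * ‖v‖ * ‖P * a - a * P‖ * (‖v‖ * ‖P‖) := by
          refine le_trans (norm_mul_le _ _) ?_
          gcongr
          · refine le_trans (norm_mul_le _ _) ?_
            gcongr
            exact norm_mul_le _ _
          · exact norm_mul_le _ _
      _ ≤ 1 * ‖v‖ * ‖P * a - a * P‖ * (‖v‖ * 1) := by gcongr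
      _ = ‖v‖ ^ 2 * ‖P * a - a * P‖ := by ring
      _ = ‖v‖ ^ 2 * max ‖Q * a * P‖ ‖Q * star a * P‖ := by
          rw [hc, hflip a, max_comm]
  refine ⟨hcomm, fun a => by rw [star_star, max_comm], fun a b => ?_, fun u => ?_⟩
  · refine max_le ?_ ?_
    · refine le_trans (hleib a b) ?_
      gcongr
      · exact le_max_left _ _
      · exact le_max_left _ _
    · calc ‖Q * star (a * b) * P‖ = ‖Q * (star b * star a) * P‖ := by rw [star_mul]
        _ ≤ ‖star b‖ * ‖Q * star a * P‖ + ‖Q * star b * P‖ * ‖star a‖ := hleib _ _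
        _ = ‖a‖ * ‖Q * star b * P‖ + ‖Q * star a * P‖ * ‖b‖ := by
            rw [norm_star, norm_star]; ring
        _ ≤ ‖a‖ * max ‖Q * b * P‖ ‖Q * star b * P‖ +
            max ‖Q * a * P‖ ‖Q * star a * P‖ * ‖b‖ := by
            gcongr
            · exact le_max_right _ _
            · exact le_max_right _ _
  · have h1 := hinv (↑u) (↑u⁻¹) u.mul_inv u.inv_mul
    have h2 := hinv (star (↑u)) (star (↑u⁻¹))
      (by rw [← star_mul, u.inv_mul, star_one]) (by rw [← star_mul, u.mul_inv, star_one])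
    rw [star_star] at h2
    rw [norm_star] at h2
    refine max_le h1 (le_trans h2 ?_)
    rw [max_comm]
end

section
/- On H = ℓ²(ℤ), let U be the bilateral right shift (Ueₙ = eₙ₊₁) and P the projection onto span{eₙ : n ≥ 0}. Then (1−P)UP = 0 while ‖(1−P)U*P‖ = 1; hence the Leibniz seminorm L(a) = ‖(1−P)aP‖ on bounded operators satisfies L(U) = 0 but L(U⁻¹) = 1, so L is not strongly Leibniz. -/
/-- Two continuous linear maps agreeing on a Hilbert basis are equal. -/
theorem hilbertBasis_ext {H : Type*} [NormedAddCommGroup H]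
    [InnerProductSpace ℂ H] [CompleteSpace H] (e : HilbertBasis ℤ ℂ H)
    {f g : H →L[ℂ] H} (h : ∀ n : ℤ, f (e n) = g (e n)) : f = g := by
  refine ContinuousLinearMap.ext_on
    (Submodule.dense_iff_topologicalClosure_eq_top.mpr e.dense_span) ?_
  rintro x ⟨n, rfl⟩
  exact h n

/-- On H = ℓ²(ℤ) (presented via a Hilbert basis (eₙ)ₙ∈ℤ), let U be the bilateral right
shift (Ueₙ = eₙ₊₁) with inverse V (Veₙ = eₙ₋₁), and P the orthogonal projection onto
span{eₙ : n ≥ 0} (so Peₙ = eₙ for n ≥ 0 and Peₙ = 0 for n < 0). Then (1−P)UP = 0 while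
‖(1−P)U⁻¹P‖ = 1; hence the Leibniz seminorm L(a) = ‖(1−P)aP‖ satisfies L(U) = 0 but
L(U⁻¹) = 1, so L is not strongly Leibniz. -/
theorem shift_not_stronglyLeibniz {H : Type*} [NormedAddCommGroup H]
    [InnerProductSpace ℂ H] [CompleteSpace H] (e : HilbertBasis ℤ ℂ H)
    (U V P : H →L[ℂ] H)
    (hU : ∀ n : ℤ, U (e n) = e (n + 1)) (hV : ∀ n : ℤ, V (e n) = e (n - 1))
    (hUV : U.comp V = 1) (hVU : V.comp U = 1)
    (hP : ∀ n : ℤ, P (e n) = if 0 ≤ n then e n else 0) :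
    ((1 - P).comp (U.comp P) = 0 ∧ ‖(1 - P).comp (V.comp P)‖ = 1) ∧
      ¬ ∀ u : (H →L[ℂ] H)ˣ, ‖(1 - P).comp (((↑(u⁻¹ : (H →L[ℂ] H)ˣ) : H →L[ℂ] H)).comp P)‖ ≤
        ‖(↑(u⁻¹ : (H →L[ℂ] H)ˣ) : H →L[ℂ] H)‖ ^ 2 *
          ‖(1 - P).comp ((↑u : H →L[ℂ] H).comp P)‖ := by
  have hon := e.orthonormal
  have hLU : (1 - P).comp (U.comp P) = 0 := by
    refine hilbertBasis_ext e fun n => ?_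
    simp only [ContinuousLinearMap.comp_apply, hP, ContinuousLinearMap.zero_apply]
    by_cases hn : 0 ≤ n
    · simp only [if_pos hn, hU, ContinuousLinearMap.sub_apply, ContinuousLinearMap.one_apply,
        hP, if_pos (by omega : (0:ℤ) ≤ n + 1), sub_self]
    · simp [if_neg hn]
  have hLV : (1 - P).comp (V.comp P) = (innerSL ℂ (e 0)).smulRight (e (-1)) := by
    refine hilbertBasis_ext e fun n => ?_
    have hin : (innerSL ℂ (e 0)) (e n) = if 0 = n then 1 else 0 := by
      simpa using orthonormal_iff_ite.mp hon (0 : ℤ) n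
    simp only [ContinuousLinearMap.comp_apply, hP, ContinuousLinearMap.smulRight_apply, hin]
    by_cases hn : 0 ≤ n
    · rcases eq_or_lt_of_le hn with h0 | h0
      · subst h0
        simp only [if_pos le_rfl, hV, if_pos rfl, one_smul,
          ContinuousLinearMap.sub_apply, ContinuousLinearMap.one_apply, hP,
          if_neg (by omega : ¬ (0:ℤ) ≤ 0 - 1)]
        norm_num
      · simp only [if_pos hn, hV, if_neg (by omega : ¬ 0 = n), zero_smul,
          ContinuousLinearMap.sub_apply, ContinuousLinearMap.one_apply, hP,
          if_pos (by omega : (0:ℤ) ≤ n - 1), sub_self]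
    · simp [if_neg hn, if_neg (by omega : ¬ 0 = n)]
  have hnorm : ‖(1 - P).comp (V.comp P)‖ = 1 := by
    rw [hLV, ContinuousLinearMap.norm_smulRight_apply, innerSL_apply_norm,
      hon.1 0, hon.1 (-1), one_mul]
  refine ⟨⟨hLU, hnorm⟩, fun hall => ?_⟩
  have h := hall ⟨U, V, hUV, hVU⟩
  simp only [Units.inv_mk] at h
  rw [hnorm, hLU] at h
  norm_num at h
end
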